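/- arXiv:2107.07294 — 2 statements merged into one kernel-verified Lean document; each statement's English description precedes it below -/
import Mathlib

section
/- If a preference relation ≿ on ℝ^L_+ is monotone, strictly convex and continuous, then its Walrasian demand f^≿(p), the unique maximizer of ≿ on B(p) = {x : p·x ≤ 1}, exists, is unique, satisfies Walras' law p·f^≿(p) = 1, and the resulting demand function is continuous in p on ℝ^L_{++}. -/
namespace Paper

variable {L H : ℕ}

/-- Inner product of a price vector and a commodity bundle. -/
noncomputable def dot (p x : Fin L → ℝ) : ℝ := ∑ i, p i * x i

/-- membership in the consumption set X = ℝ^L_+ -/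
def nneg (x : Fin L → ℝ) : Prop := ∀ i, 0 ≤ x i

/-- strictly positive vector (interior of X, resp. p ≫ 0) -/
def posv (x : Fin L → ℝ) : Prop := ∀ i, 0 < x i

/-- a preference relation on bundles -/
abbrev Pref (L : ℕ) := (Fin L → ℝ) → (Fin L → ℝ) → Prop

/-- strict preference x ≻ y -/
def PStrict (R : Pref L) (x y : Fin L → ℝ) : Prop := R x y ∧ ¬ R y x

/-- complete and transitive preference relation on ℝ^L_+ -/
def IsPref (R : Pref L) : Prop :=
  (∀ x y, nneg x → nneg y → R x y ∨ R y x) ∧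
  (∀ x y z, R x y → R y z → R x z)

/-- monotone: u ≫ v implies u ≻ v -/
def MonoWeak (R : Pref L) : Prop :=
  ∀ u v : Fin L → ℝ, nneg v → (∀ i, v i < u i) → PStrict R u v

/-- monotone: u ≥ v, u ≠ v implies u ≻ v -/
def MonoStrong (R : Pref L) : Prop :=
  ∀ u v : Fin L → ℝ, nneg v → (∀ i, v i ≤ u i) → u ≠ v → PStrict R u v

/-- continuity: closed upper and lower contour sets -/
def ContPref (R : Pref L) : Prop :=
  ∀ x : Fin L → ℝ, IsClosed {y | R y x} ∧ IsClosed {y | R x y}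

/-- convexity: u ≿ v implies λu + (1-λ)v ≿ v -/
def PrefConvex (R : Pref L) : Prop :=
  ∀ u v : Fin L → ℝ, nneg u → nneg v → R u v →
    ∀ l : ℝ, 0 ≤ l → l ≤ 1 → R (l • u + (1 - l) • v) v

/-- strict convexity: u ≿ v, u ≠ v implies λu + (1-λ)v ≻ v for λ ∈ (0,1) -/
def PrefStrictConvex (R : Pref L) : Prop :=
  ∀ u v : Fin L → ℝ, nneg u → nneg v → R u v → u ≠ v →
    ∀ l : ℝ, 0 < l → l < 1 → PStrict R (l • u + (1 - l) • v) v

/-- the budget set B(p) = {x ∈ ℝ^L_+ : p·x ≤ 1} -/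
def Budget (p x : Fin L → ℝ) : Prop := nneg x ∧ dot p x ≤ 1

/-- x is a ≿-maximizer on the budget set B(p) (Walrasian demand) -/
def IsDemand (R : Pref L) (p x : Fin L → ℝ) : Prop :=
  Budget p x ∧ ∀ y, Budget p y → R x y

/-- membership in the box X_r = {w : (1+r)⁻¹ 𝟙 ≤ w ≤ (1+r) 𝟙} -/
def InBox (r : ℝ) (x : Fin L → ℝ) : Prop := ∀ i, (1 + r)⁻¹ ≤ x i ∧ x i ≤ 1 + r

/-- Lipschitzian preferences in the sense of Mas-Colell (1977) -/
def Lipschitzian (R : Pref L) : Prop :=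
  ∀ r : ℝ, 0 < r → ∃ K : ℝ, 0 < K ∧ ∃ ε : ℝ, 0 < ε ∧
    ∀ x y z : Fin L → ℝ, InBox r x → InBox r y → InBox r z →
      R x y → R y x → ‖x - z‖ < ε →
      Metric.infDist x {w | R w z} ≤ K * Metric.infDist y {w | R w z}

/-- x is strictly revealed preferred to y through the first n observations:
there is a chain x ≥ x_{i_1}, p_{i_j}·x_{i_{j+1}} < p_{i_j}·x_{i_j}, x_{i_N} ≥ y -/
def RevChain (p xo : ℕ → Fin L → ℝ) (n : ℕ) (x y : Fin L → ℝ) : Prop :=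
  ∃ N : ℕ, ∃ idx : Fin (N + 1) → ℕ,
    (∀ j, idx j < n) ∧
    (∀ i, xo (idx 0) i ≤ x i) ∧
    (∀ j : Fin N, dot (p (idx j.castSucc)) (xo (idx j.succ)) <
       dot (p (idx j.castSucc)) (xo (idx j.castSucc))) ∧
    (∀ i, y i ≤ xo (idx (Fin.last N)) i)

/-- the revealed demand correspondence x^{R_n}(q) -/
def RevDemand (p xo : ℕ → Fin L → ℝ) (n : ℕ) (q : Fin L → ℝ) : Set (Fin L → ℝ) :=
  {x | nneg x ∧ dot q x = 1 ∧
    ¬ ∃ x', nneg x' ∧ dot q x' ≤ 1 ∧ RevChain p xo n x' x}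

/-- the strong axiom of revealed preference for the first n observations -/
def SARP (p xo : ℕ → Fin L → ℝ) (n : ℕ) : Prop :=
  ∀ m : ℕ, 0 < m → ∀ idx : Fin (m + 1) → ℕ, (∀ j, idx j < n) →
    (∀ j j' : Fin (m + 1), j ≠ j' → xo (idx j) ≠ xo (idx j')) →
    (∀ j : Fin m, dot (p (idx j.castSucc)) (xo (idx j.succ)) ≤
       dot (p (idx j.castSucc)) (xo (idx j.castSucc))) →
    dot (p (idx (Fin.last m))) (xo (idx 0)) >
      dot (p (idx (Fin.last m))) (xo (idx (Fin.last m)))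

/-- the standard regularity package: complete, transitive, continuous,
monotone, strictly convex -/
def Regular (R : Pref L) : Prop :=
  IsPref R ∧ ContPref R ∧ MonoStrong R ∧ PrefStrictConvex R

/-- aggregate demand d(p, w¹,…,w^H) = Σ_h f^h(p/w^h), where f^h is the
individual demand function at income 1 -/
noncomputable def aggDem (f : Fin H → (Fin L → ℝ) → (Fin L → ℝ)) (p : Fin L → ℝ) (w : Fin H → ℝ) :
    Fin L → ℝ :=
  fun i => ∑ h, f h (fun j => p j / w h) i

/-- membership in the (relatively interior) simplex Δ^{L-1} -/
def InSimplex (p : Fin L → ℝ) : Prop := posv p ∧ ∑ i, p i = 1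

/-- p is a Walrasian equilibrium price for the endowment profile eprof -/
def EqPrice (f : Fin H → (Fin L → ℝ) → (Fin L → ℝ)) (eprof : Fin H → Fin L → ℝ)
    (p : Fin L → ℝ) : Prop :=
  InSimplex p ∧ ∀ i, ∑ h, (f h (fun j => p j / dot p (eprof h)) i - eprof h i) = 0

/-- the income box W = ×_h [w̲_h, w̄_h] -/
def InW (wlo whi : Fin H → ℝ) (w : Fin H → ℝ) : Prop := ∀ h, wlo h ≤ w h ∧ w h ≤ whi h

/-- the set C_n of allocation profiles consistent with the first n observations:
adding up to aggregate demand, on the budget hyperplanes, satisfying SARP -/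
def InC (p : ℕ → Fin L → ℝ) (w : ℕ → Fin H → ℝ) (D : ℕ → Fin L → ℝ) (n : ℕ)
    (xa : ℕ → Fin H → Fin L → ℝ) : Prop :=
  (∀ k < n, ∀ h, nneg (xa k h)) ∧
  (∀ k < n, ∀ i, ∑ h, xa k h i = D k i) ∧
  (∀ k < n, ∀ h, dot (p k) (xa k h) = w k h) ∧
  (∀ h, SARP p (fun k => xa k h) n)

/-- x is equilibrium-revealed preferred to y by individual h given n observations -/
def EqRevPref (p : ℕ → Fin L → ℝ) (w : ℕ → Fin H → ℝ) (D : ℕ → Fin L → ℝ)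
    (n : ℕ) (h : Fin H) (x y : Fin L → ℝ) : Prop :=
  ∀ xa : ℕ → Fin H → Fin L → ℝ, InC p w D n xa → RevChain p (fun k => xa k h) n x y

/-- the equilibrium revealed demand correspondence x^{R^h_n}(q) -/
def EqRevDemand (p : ℕ → Fin L → ℝ) (w : ℕ → Fin H → ℝ) (D : ℕ → Fin L → ℝ)
    (n : ℕ) (h : Fin H) (q : Fin L → ℝ) : Set (Fin L → ℝ) :=
  {x | nneg x ∧ dot q x = 1 ∧
    ¬ ∃ x', nneg x' ∧ dot q x' ≤ 1 ∧ EqRevPref p w D n h x' x}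

/-- Assumption 1: any preference profile distinct from R generates a different
aggregate demand at some price and income profile in ℝ^L_{++} × W -/
def Assumption1 (R : Fin H → Pref L) (f : Fin H → (Fin L → ℝ) → (Fin L → ℝ))
    (wlo whi : Fin H → ℝ) : Prop :=
  ∀ (R' : Fin H → Pref L) (f' : Fin H → (Fin L → ℝ) → (Fin L → ℝ)),
    (∀ h, Regular (R' h) ∧ Lipschitzian (R' h)) →
    (∀ h q, posv q → IsDemand (R' h) q (f' h q)) →
    R' ≠ R →
    ∃ (pp : Fin L → ℝ) (ww : Fin H → ℝ), posv pp ∧ InW wlo whi ww ∧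
      aggDem f' pp ww ≠ aggDem f pp ww

/-- the revealed approximate equilibrium correspondence P^{R_n}(e^H) -/
def RevApproxEq (p : ℕ → Fin L → ℝ) (w : ℕ → Fin H → ℝ) (D : ℕ → Fin L → ℝ)
    (n : ℕ) (eprof : Fin H → Fin L → ℝ) : Set (Fin L → ℝ) :=
  {q | InSimplex q ∧
    ∃ xa : Fin H → Fin L → ℝ,
      (∀ h, nneg (xa h)) ∧
      (∀ h, dot q (xa h) = dot q (eprof h)) ∧
      (∀ i, ∑ h, (xa h i - eprof h i) = 0) ∧
      ¬ ∃ ya : Fin H → Fin L → ℝ,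
        (∀ h, nneg (ya h)) ∧ (∀ h, dot q (ya h) = dot q (eprof h)) ∧
        (∀ h, EqRevPref p w D n h (ya h) (xa h))}

/-!
The budget set of a price system `p ≫ 0` is compact, and the upper contour sets of a complete,
transitive, continuous preference, restricted to a compact set, form a directed family of nonempty
compact sets; by Cantor's intersection theorem they have a common point, a best element, so demand
exists. Two distinct best bundles would have a strictly better midpoint in the (convex) budget set,
so demand is unique, and under monotonicity income left unspent could buy more of every good, which
gives Walras' law. Finally, near `p₀ ≫ 0` demand stays in a fixed box, and every cluster point of
demand as `p → p₀` is a best bundle at `p₀`, because upper contour sets are closed and every budget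
bundle at `p₀` is a limit of bundles that are strictly affordable at nearby prices. Compactness and
uniqueness then give continuity.
-/

open Filter Topology Matrix

lemma dot_eq_dotProduct (p x : Fin L → ℝ) : dot p x = p ⬝ᵥ x := rfl

lemma tendsto_dot {ι : Type*} {l : Filter ι} {p x : ι → Fin L → ℝ} {p₀ a : Fin L → ℝ}
    (hp : Tendsto p l (𝓝 p₀)) (hx : Tendsto x l (𝓝 a)) :
    Tendsto (fun i => dot (p i) (x i)) l (𝓝 (dot p₀ a)) :=
  ((continuous_fst.dotProduct continuous_snd).tendsto (p₀, a)).comp (hp.prodMk_nhds hx)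

lemma dot_add (p x y : Fin L → ℝ) : dot p (x + y) = dot p x + dot p y := dotProduct_add p x y

lemma dot_smul (p : Fin L → ℝ) (c : ℝ) (x : Fin L → ℝ) : dot p (c • x) = c * dot p x :=
  dotProduct_smul c p x

lemma isClosed_setOf_nneg : IsClosed {x : Fin L → ℝ | nneg x} := isClosed_Ici

lemma Budget.le_inv {p x : Fin L → ℝ} (hp : posv p) (hx : Budget p x) (i : Fin L) :
    x i ≤ (p i)⁻¹ := by
  have hle : p i * x i ≤ 1 :=
    (Finset.single_le_sum (fun j _ => mul_nonneg (hp j).le (hx.1 j)) (Finset.mem_univ i)).trans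
      hx.2
  rwa [← one_div, le_div_iff₀ (hp i), mul_comm]

lemma isCompact_budget {p : Fin L → ℝ} (hp : posv p) : IsCompact {x : Fin L → ℝ | Budget p x} := by
  refine (isCompact_Icc (a := 0) (b := p⁻¹)).of_isClosed_subset ?_ fun x hx =>
    ⟨hx.1, fun i => hx.le_inv hp i⟩
  exact isClosed_setOf_nneg.inter
    (isClosed_le (continuous_const.dotProduct continuous_id) continuous_const)

lemma convex_budget (p : Fin L → ℝ) : Convex ℝ {x : Fin L → ℝ | Budget p x} :=
  (convex_Ici 0).inter <| convex_halfSpace_le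
    ⟨dot_add p, dot_smul p⟩ 1

section Preference

variable {R : Pref L}

lemma IsPref.refl (hP : IsPref R) {x : Fin L → ℝ} (hx : nneg x) : R x x :=
  (hP.1 x x hx hx).elim id id

lemma IsPref.exists_forall_of_isCompact (hP : IsPref R) (hC : ContPref R)
    {S : Set (Fin L → ℝ)} (hS : IsCompact S) (hne : S.Nonempty) (hsub : ∀ x ∈ S, nneg x) :
    ∃ x ∈ S, ∀ y ∈ S, R x y := by
  have : Nonempty S := hne.to_subtype
  let t : S → Set (Fin L → ℝ) := fun y => S ∩ {x | R x y}
  have htd : Directed (· ⊇ ·) t := fun y z => by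
    rcases hP.1 y z (hsub y y.2) (hsub z z.2) with h | h
    · exact ⟨y, le_rfl, fun x hx => ⟨hx.1, hP.2 x y z hx.2 h⟩⟩
    · exact ⟨z, fun x hx => ⟨hx.1, hP.2 x z y hx.2 h⟩, le_rfl⟩
  obtain ⟨x, hx⟩ := IsCompact.nonempty_iInter_of_directed_nonempty_isCompact_isClosed t htd
    (fun y => ⟨y, y.2, hP.refl (hsub y y.2)⟩) (fun y => hS.inter_right (hC y).1)
    (fun y => hS.isClosed.inter (hC y).1)
  rw [Set.mem_iInter] at hx
  exact ⟨x, (hx (Classical.arbitrary S)).1, fun y hy => (hx ⟨y, hy⟩).2⟩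

end Preference

section Demand

variable {R : Pref L} {p x : Fin L → ℝ}

lemma exists_isDemand (hP : IsPref R) (hC : ContPref R) (hp : posv p) : ∃ x, IsDemand R p x := by
  obtain ⟨x, hx, hmax⟩ := hP.exists_forall_of_isCompact hC (isCompact_budget hp)
    ⟨0, fun _ => le_rfl, by simp [dot]⟩ fun x hx => hx.1
  exact ⟨x, hx, hmax⟩

lemma IsDemand.unique (hSC : PrefStrictConvex R) {y : Fin L → ℝ} (hx : IsDemand R p x)
    (hy : IsDemand R p y) : x = y := by
  by_contra hne
  have hmid : Budget p ((1 / 2 : ℝ) • x + (1 - 1 / 2 : ℝ) • y) :=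
    convex_budget p hx.1 hy.1 (by norm_num) (by norm_num) (by norm_num)
  exact (hSC x y hx.1.1 hy.1.1 (hx.2 y hy.1) hne (1 / 2) (by norm_num) (by norm_num)).2
    (hy.2 _ hmid)

lemma IsDemand.dot_eq_one (hL : 0 < L) (hM : MonoStrong R) (hp : posv p) (hx : IsDemand R p x) :
    dot p x = 1 := by
  by_contra hne
  have hlt : dot p x < 1 := hx.1.2.lt_of_ne hne
  have hp1 : 0 < dot p 1 := by
    rw [dot_eq_dotProduct, dotProduct_one]
    exact Finset.sum_pos (fun i _ => hp i) ⟨⟨0, hL⟩, Finset.mem_univ _⟩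
  set t := (1 - dot p x) / dot p 1
  have ht : 0 < t := div_pos (by linarith) hp1
  set y := x + t • (1 : Fin L → ℝ)
  have hy : Budget p y := by
    refine ⟨fun i => ?_, le_of_eq ?_⟩
    · simpa [y] using add_nonneg (hx.1.1 i) ht.le
    · rw [dot_add, dot_smul, div_mul_cancel₀ _ hp1.ne']
      ring
  have hxy : ∀ i, x i ≤ y i := fun i => by simpa [y] using ht.le
  have hyx : y ≠ x := fun h => by simpa [y, ht.ne'] using congrFun h ⟨0, hL⟩
  exact (hM y x hx.1.1 hxy hyx).2 (hx.2 y hy)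

lemma IsDemand.of_tendsto (hC : ContPref R) {ι : Type*} {l : Filter ι} [l.NeBot]
    {p x : ι → Fin L → ℝ} {p₀ a : Fin L → ℝ} (hp : Tendsto p l (𝓝 p₀)) (hx : Tendsto x l (𝓝 a))
    (hd : ∀ᶠ i in l, IsDemand R (p i) (x i)) : IsDemand R p₀ a := by
  have ha : Budget p₀ a :=
    ⟨isClosed_setOf_nneg.mem_of_tendsto hx (hd.mono fun _ h => h.1.1),
      le_of_tendsto (tendsto_dot hp hx) (hd.mono fun _ h => h.1.2)⟩
  have hstrict : ∀ z, nneg z → dot p₀ z < 1 → R a z := fun z hz hz1 =>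
    (hC z).1.mem_of_tendsto hx <| by
      filter_upwards [hd, (tendsto_dot hp (tendsto_const_nhds (x := z))).eventually_lt_const hz1]
        with i hi hi1
      exact hi.2 z ⟨hz, hi1.le⟩
  refine ⟨ha, fun y hy => ?_⟩
  have hθ : Tendsto (fun θ : ℝ => θ • y) (𝓝[<] 1) (𝓝 y) := by
    simpa using ((tendsto_id (x := 𝓝 (1 : ℝ))).mono_left nhdsWithin_le_nhds).smul_const y
  refine (hC a).2.mem_of_tendsto hθ ?_
  filter_upwards [Ioo_mem_nhdsLT zero_lt_one] with θ ⟨hθ0, hθ1⟩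
  refine hstrict _ (fun i => mul_nonneg hθ0.le (hy.1 i)) ?_
  rw [dot_smul]
  nlinarith [hy.2]

lemma IsDemand.of_mapClusterPt (hC : ContPref R) {ι : Type*} {l : Filter ι}
    {p x : ι → Fin L → ℝ} {p₀ a : Fin L → ℝ} (hp : Tendsto p l (𝓝 p₀))
    (hd : ∀ᶠ i in l, IsDemand R (p i) (x i)) (ha : MapClusterPt a l x) : IsDemand R p₀ a := by
  obtain ⟨U, hU, hxU⟩ := mapClusterPt_iff_ultrafilter.1 ha
  exact IsDemand.of_tendsto hC (hp.mono_left hU) hxU (hU hd)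

end Demand

/-- Where no demand exists (e.g. outside `ℝ^L_{++}`) this is an arbitrary junk value. -/
noncomputable def walrasDemand (R : Pref L) (p : Fin L → ℝ) : Fin L → ℝ :=
  Classical.epsilon (IsDemand R p)

section WalrasDemand

variable {R : Pref L}

lemma isDemand_walrasDemand (hP : IsPref R) (hC : ContPref R) {p : Fin L → ℝ} (hp : posv p) :
    IsDemand R p (walrasDemand R p) :=
  Classical.epsilon_spec (exists_isDemand hP hC hp)

lemma continuousOn_walrasDemand (hP : IsPref R) (hC : ContPref R) (hSC : PrefStrictConvex R) :
    ContinuousOn (walrasDemand R) {p | posv p} := by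
  intro p₀ hp₀
  have hnear : ∀ᶠ p in 𝓝[{p | posv p}] p₀, posv p ∧ ∀ i, p₀ i / 2 < p i :=
    eventually_mem_nhdsWithin.and <| nhdsWithin_le_nhds <| eventually_all.2 fun i =>
      (continuous_apply i).continuousAt.eventually (lt_mem_nhds (half_lt_self (hp₀ i)))
  have hd : ∀ᶠ p in 𝓝[{p | posv p}] p₀, IsDemand R p (walrasDemand R p) :=
    hnear.mono fun p hp => isDemand_walrasDemand hP hC hp.1
  have hbox : ∀ᶠ p in 𝓝[{p | posv p}] p₀,
      walrasDemand R p ∈ Set.Icc 0 (fun i => (p₀ i / 2)⁻¹) :=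
    (hnear.and hd).mono fun p ⟨⟨hp, hp₀p⟩, hdp⟩ => ⟨hdp.1.1, fun i =>
      (hdp.1.le_inv hp i).trans (inv_anti₀ (half_pos (hp₀ i)) (hp₀p i).le)⟩
  refine isCompact_Icc.tendsto_nhds_of_unique_mapClusterPt hbox fun a _ ha => ?_
  exact (IsDemand.of_mapClusterPt hC (tendsto_id.mono_left nhdsWithin_le_nhds) hd ha).unique hSC
    (isDemand_walrasDemand hP hC hp₀)

end WalrasDemand

/-- existence, uniqueness, Walras' law and continuity of Walrasian
demand for monotone, strictly convex, continuous preferences. -/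
theorem statement5 (hL : 0 < L) (R : Pref L)
    (hP : IsPref R) (hC : ContPref R) (hM : MonoStrong R) (hSC : PrefStrictConvex R) :
    ∃ f : (Fin L → ℝ) → (Fin L → ℝ),
      (∀ p, posv p →
        IsDemand R p (f p) ∧ (∀ x, IsDemand R p x → x = f p) ∧ dot p (f p) = 1) ∧
      ContinuousOn f {p | posv p} :=
  ⟨walrasDemand R, fun _ hp =>
    ⟨isDemand_walrasDemand hP hC hp, fun _ hx => hx.unique hSC (isDemand_walrasDemand hP hC hp),
      (isDemand_walrasDemand hP hC hp).dot_eq_one hL hM hp⟩,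
    continuousOn_walrasDemand hP hC hSC⟩

end Paper
end

section
/- Demand observations {(p_k, x_k)}_{k=1}^n generated by a single monotone, strictly convex, continuous preference relation ≿ (x_k = f^≿(p_k), p_k·x_k = 1) satisfy the strong axiom of revealed preference: for any ordered subset i_1,…,i_m with pairwise distinct bundles and p_{i_j}·x_{i_{j+1}} ≤ p_{i_j}·x_{i_j} for all j = 1,…,m−1, it must hold that p_{i_m}·x_{i_1} > p_{i_m}·x_{i_m}. -/
namespace Paper

variable {L H : ℕ}

lemma dot_convex' (p u v : Fin L → ℝ) (l : ℝ) :
    dot p (l • u + (1 - l) • v) = l * dot p u + (1 - l) * dot p v := by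
  simp only [dot, Pi.add_apply, Pi.smul_apply, smul_eq_mul, mul_add,
    Finset.sum_add_distrib, Finset.mul_sum]
  congr 1 <;> exact Finset.sum_congr rfl (fun i _ => by ring)

/-- key step: if x is demanded at p with p·x = 1, y is a nonneg bundle with
p·y ≤ 1 and y ≠ x, then x ≻ y -/
lemma strict_step (R : Pref L) (hP : IsPref R) (hSC : PrefStrictConvex R)
    (p x y : Fin L → ℝ) (hd : IsDemand R p x) (h1 : dot p x = 1)
    (hy : nneg y) (hby : dot p y ≤ 1) (hne : y ≠ x) : PStrict R x y := by
  have hxB : Budget p x := hd.1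
  have hRxy : R x y := hd.2 y ⟨hy, hby⟩
  refine ⟨hRxy, fun hRyx => ?_⟩
  have hz := hSC y x hy hxB.1 hRyx hne (1/2) (by norm_num) (by norm_num)
  have hzB : Budget p ((1/2 : ℝ) • y + ((1:ℝ) - 1/2) • x) := by
    constructor
    · intro i
      simp only [Pi.add_apply, Pi.smul_apply, smul_eq_mul]
      nlinarith [hy i, hxB.1 i]
    · rw [dot_convex']
      nlinarith
  exact hz.2 (hd.2 _ hzB)

/-- demand observations generated by a monotone, strictly convex,
continuous preference satisfy the strong axiom of revealed preference. -/
theorem statement6 (hL : 0 < L) (R : Pref L)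
    (hP : IsPref R) (hC : ContPref R) (hM : MonoStrong R) (hSC : PrefStrictConvex R)
    (n : ℕ) (p xo : ℕ → Fin L → ℝ)
    (hp : ∀ k < n, posv (p k))
    (hdem : ∀ k < n, IsDemand R (p k) (xo k) ∧ dot (p k) (xo k) = 1) :
    SARP p xo n := by
  intro m hm idx hidx hdist hchain
  -- strict preference along the chain
  have step : ∀ j : Fin m, PStrict R (xo (idx j.castSucc)) (xo (idx j.succ)) := by
    intro j
    have hk := hidx j.castSucc
    have hk' := hidx j.succ
    have hd := hdem _ hk
    have hd' := hdem _ hk'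
    refine strict_step R hP hSC _ _ _ hd.1 hd.2 hd'.1.1.1 ?_ ?_
    · calc dot (p (idx j.castSucc)) (xo (idx j.succ))
          ≤ dot (p (idx j.castSucc)) (xo (idx j.castSucc)) := hchain j
        _ = 1 := hd.2
    · exact fun h => hdist j.succ j.castSucc (by simp [Fin.ext_iff]) h
  -- transitive closure: x_{i_0} ≻ x_{i_j} for j > 0
  have htrans : ∀ a b c, PStrict R a b → PStrict R b c → PStrict R a c := by
    intro a b c hab hbc
    exact ⟨hP.2 _ _ _ hab.1 hbc.1, fun hca => hbc.2 (hP.2 _ _ _ hca hab.1)⟩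
  have main : ∀ j : ℕ, ∀ hj : j + 1 ≤ m,
      PStrict R (xo (idx 0)) (xo (idx ⟨j + 1, Nat.lt_succ_of_le hj⟩)) := by
    intro j
    induction j with
    | zero =>
      intro hj
      have := step ⟨0, hj⟩
      simpa [Fin.castSucc, Fin.succ, Fin.ext_iff] using this
    | succ k ih =>
      intro hj
      have hk : k + 1 ≤ m := Nat.le_of_succ_le hj
      have h1 := ih hk
      have h2 := step ⟨k + 1, hj⟩
      have heq : (⟨k + 1, Nat.lt_succ_of_le hk⟩ : Fin (m + 1)) =
          (⟨k + 1, hj⟩ : Fin m).castSucc := by simp [Fin.ext_iff]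
      rw [heq] at h1
      have := htrans _ _ _ h1 h2
      simpa [Fin.succ, Fin.ext_iff] using this
  have hlast : PStrict R (xo (idx 0)) (xo (idx (Fin.last m))) := by
    obtain ⟨m', rfl⟩ : ∃ m', m = m' + 1 := ⟨m - 1, (Nat.succ_pred_eq_of_pos hm).symm⟩
    have := main m' le_rfl
    simpa [Fin.last, Fin.ext_iff] using this
  -- conclude
  have hklast := hidx (Fin.last m)
  have hd := hdem _ hklast
  have hx0 : nneg (xo (idx 0)) := (hdem _ (hidx 0)).1.1.1
  by_contra hle
  push_neg at hle
  rw [hd.2] at hle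
  exact hlast.2 (hd.1.2 _ ⟨hx0, hle⟩)

end Paper
end
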